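/- arXiv:cs/0508088 — 2 statements merged into one kernel-verified Lean document; each statement's English description precedes it below -/
import Mathlib

section
/- Let Σ and Δ be finite nonempty alphabets, n ≥ 1, and c : Σ × Σ^{≤n} → Δ⁺ a function. If for every context u ∈ Σ^{≤n} the map σ ↦ c(σ,u) is injective and the set C_u = {c(σ,u) : σ ∈ Σ} is a prefix code (no codeword in C_u is a proper prefix of a different codeword in C_u), then the homomorphic extension c̄ is injective, i.e., c is an adaptive code of order n. -/
/-! Decode from left to right. Once a prefix `p` of the message is known, so is the context
`u` of the next symbol, and the encoding continues with a codeword of `C_u`. Two messages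
with the same encoding thus start, after `p`, with two codewords of the prefix code `C_u`
of which one is a prefix of the other; they are equal, hence so are the symbols. -/

/-- The homomorphic extension `c̄` of a function `c : Σ × Σ^{≤n} → Δ⁺`:
the `i`-th codeword is determined by the `i`-th symbol together with the
(at most `n`) immediately preceding symbols. -/
def adaptiveExt {S D : Type*} (c : S → List S → List D) (n : ℕ) (w : List S) : List D :=
  (List.finRange w.length).flatMap fun i => c (w.get i) ((w.take i).drop (i - n))

lemma eq_of_append_prefix_of_append_prefix {S D : Type*} {f : S → List D}
    (hinj : Function.Injective f) (hpref : ∀ σ σ' : S, f σ <+: f σ' → f σ = f σ')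
    {x z : List D} {a b : S} (ha : x ++ f a <+: z) (hb : x ++ f b <+: z) : a = b := by
  apply hinj
  rcases List.prefix_or_prefix_of_prefix ha hb with h | h
  · exact hpref a b ((List.prefix_append_right_inj x).mp h)
  · exact (hpref b a ((List.prefix_append_right_inj x).mp h)).symm

section adaptiveExt

variable {S D : Type*} (c : S → List S → List D) (n : ℕ)

lemma length_rtake_le (p : List S) : (p.rtake n).length ≤ n := by
  simp only [List.rtake, List.length_drop]
  omega

lemma adaptiveExt_append_singleton (w : List S) (a : S) :
    adaptiveExt c n (w ++ [a]) = adaptiveExt c n w ++ c a (w.rtake n) := by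
  simp only [adaptiveExt, List.flatMap_def, ← List.ofFn_eq_map]
  rw [List.ofFn_congr (List.length_append (as := w) (bs := [a])), List.ofFn_succ_last]
  simp [List.rtake, List.getElem_append_left, List.take_append_of_le_length]

lemma adaptiveExt_prefix_append (w v : List S) : adaptiveExt c n w <+: adaptiveExt c n (w ++ v) := by
  induction v using List.reverseRecOn with
  | nil => simp
  | append_singleton v a ih =>
    rw [← List.append_assoc, adaptiveExt_append_singleton]
    exact ih.trans (List.prefix_append _ _)

lemma adaptiveExt_append_codeword_prefix (p t : List S) (a : S) :
    adaptiveExt c n p ++ c a (p.rtake n) <+: adaptiveExt c n (p ++ a :: t) := by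
  rw [← adaptiveExt_append_singleton]
  simpa using adaptiveExt_prefix_append c n (p ++ [a]) t

/-- Generalised over an already decoded prefix `p`, so that the induction can move one
symbol at a time from `w` into `p`. -/
lemma adaptiveExt_append_injective
    (hne : ∀ (σ : S) (u : List S), u.length ≤ n → c σ u ≠ [])
    (hinj : ∀ u : List S, u.length ≤ n → Function.Injective fun σ => c σ u)
    (hpref : ∀ u : List S, u.length ≤ n → ∀ σ σ' : S,
      (c σ u) <+: (c σ' u) → c σ u = c σ' u)
    (p : List S) : Function.Injective fun w => adaptiveExt c n (p ++ w) := by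
  have no_codeword_after (p t : List S) (a : S) :
      adaptiveExt c n (p ++ a :: t) ≠ adaptiveExt c n p := fun h => by
    have hlen := (adaptiveExt_append_codeword_prefix c n p t a).length_le
    have hpos := List.length_pos_of_ne_nil (hne a _ (length_rtake_le n p))
    rw [h, List.length_append] at hlen
    omega
  intro w w' h
  dsimp only at h
  induction w generalizing p w' with
  | nil =>
    cases w' with
    | nil => rfl
    | cons b t' => exact absurd h.symm (by simpa using no_codeword_after p t' b)
  | cons a t ih =>
    cases w' with
    | nil => exact absurd h (by simpa using no_codeword_after p t a)
    | cons b t' =>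
      have hu := length_rtake_le n p
      have hab : a = b :=
        eq_of_append_prefix_of_append_prefix (f := fun σ => c σ (p.rtake n)) (hinj _ hu)
          (hpref _ hu) (adaptiveExt_append_codeword_prefix c n p t a)
          (h ▸ adaptiveExt_append_codeword_prefix c n p t' b)
      subst hab
      simpa using ih (p ++ [a]) (by simpa using h)

end adaptiveExt

theorem adaptive_code_of_prefix_codes_general
    {S D : Type*}
    (n : ℕ) (c : S → List S → List D)
    (hne : ∀ (σ : S) (u : List S), u.length ≤ n → c σ u ≠ [])
    (hinj : ∀ u : List S, u.length ≤ n → Function.Injective fun σ => c σ u)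
    (hpref : ∀ u : List S, u.length ≤ n → ∀ σ σ' : S,
      (c σ u) <+: (c σ' u) → c σ u = c σ' u) :
    Function.Injective (adaptiveExt c n) :=
  adaptiveExt_append_injective c n hne hinj hpref []

/-- If, for every context `u ∈ Σ^{≤n}`, the map `σ ↦ c(σ,u)` is injective
and the set `C_u = {c(σ,u) : σ ∈ Σ}` is a prefix code (nonempty codewords,
none a proper prefix of a different one), then the homomorphic extension
`c̄` is injective, i.e. `c` is an adaptive code of order `n`. -/
theorem adaptive_code_of_prefix_codes
    {S D : Type*} [Fintype S] [Nonempty S] [Fintype D] [Nonempty D]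
    (n : ℕ) (hn : 1 ≤ n) (c : S → List S → List D)
    (hne : ∀ (σ : S) (u : List S), u.length ≤ n → c σ u ≠ [])
    (hinj : ∀ u : List S, u.length ≤ n → Function.Injective fun σ => c σ u)
    (hpref : ∀ u : List S, u.length ≤ n → ∀ σ σ' : S,
      (c σ u) <+: (c σ' u) → c σ u = c σ' u) :
    Function.Injective (adaptiveExt c n) :=
  adaptive_code_of_prefix_codes_general n c hne hinj hpref
end

section
/- Let Σ and Δ be alphabets and c_F : Σ × Σ* → Δ⁺ a function. Suppose that for every u ∈ Σ* the map σ ↦ c_F(σ,u) is injective and its image {c_F(σ,u) : σ ∈ Σ} is a prefix code (no element is a proper prefix of a different element). Let F : ℕ⁺ × Σ⁺ → Σ* be the adaptive function F(i, σ₁…σ_m) = λ if i = 1 or i > m, and F(i, σ₁…σ_m) = σ₁…σ_{i−1} otherwise. Then the extension c̄_F(σ₁…σ_m) = c_F(σ₁,F(1,σ₁…σ_m))·…·c_F(σ_m,F(m,σ₁…σ_m)) is injective on Σ*, i.e., c_F is a generalized adaptive code. (This is the key claim underlying the fact that adaptive Huffman encodings — where c_F(σ,u) is the codeword of σ in the Huffman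 tree built from the already-read prefix u, and these codewords form a prefix code for each u — are particular cases of encodings by GA codes.) -/
/-- The adaptive function underlying adaptive Huffman coding (positions are
1-indexed): `F(i,w) = λ` if `i = 1` or `i > |w|`, and `F(i,w) = σ₁…σ_{i-1}`
(the already-read prefix) otherwise. -/
def huffF {S : Type*} (i : ℕ) (w : List S) : List S :=
  if i = 1 ∨ i > w.length then [] else w.take (i - 1)

/-- The generalized-adaptive extension `c̄_F` determined by an adaptive
function `F` (positions are 1-indexed). -/
def gaExt {S D : Type*} (c : S → List S → List D) (F : ℕ → List S → List S)
    (w : List S) : List D :=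
  (List.finRange w.length).flatMap fun i => c (w.get i) (F (i.val + 1) w)

/-- Sequential form of the extension: `p` is the already-read prefix. -/
def seqExt {S D : Type*} (c : S → List S → List D) : List S → List S → List D
  | _, [] => []
  | p, a :: t => c a p ++ seqExt c (p ++ [a]) t

lemma huffF_eq {S : Type*} (w : List S) (i : Fin w.length) :
    huffF (i.val + 1) w = w.take i.val := by
  unfold huffF
  rcases Nat.eq_zero_or_pos i.val with h | h
  · simp [h]
  · rw [if_neg]
    · simp
    · push_neg
      exact ⟨by omega, by omega⟩

lemma aux_eq {S D : Type*} (c : S → List S → List D) :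
    ∀ (w p : List S),
      ((List.finRange w.length).flatMap fun i => c (w.get i) (p ++ w.take i.val))
        = seqExt c p w := by
  intro w
  induction w with
  | nil => intro p; simp [seqExt]
  | cons a t ih =>
    intro p
    simp only [List.length_cons, List.finRange_succ, List.flatMap_cons, List.flatMap_map]
    simp only [Fin.val_succ, Fin.val_zero, List.take_zero, List.append_nil,
      List.get_cons_succ, List.take_succ_cons, seqExt]
    congr 1
    rw [← ih (p ++ [a])]
    congr 1
    funext i
    simp

lemma gaExt_eq {S D : Type*} (c : S → List S → List D) (w : List S) :
    gaExt c huffF w = seqExt c [] w := by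
  unfold gaExt
  rw [← aux_eq c w []]
  congr 1
  funext i
  rw [huffF_eq, List.nil_append]

/-- If for every `u ∈ Σ*` the map `σ ↦ c_F(σ,u)` is injective and its image
`{c_F(σ,u) : σ ∈ Σ}` is a prefix code (nonempty codewords, none a proper
prefix of a different one), then with `F(i,w)` the already-read prefix, the
extension `c̄_F` is injective on `Σ*`, i.e. `c_F` is a generalized adaptive
code.  (This is the key claim underlying the fact that adaptive Huffman
encodings are particular cases of encodings by GA codes.) -/
theorem adaptive_huffman_is_GA_code {S D : Type*}
    (c : S → List S → List D)
    (hne : ∀ (σ : S) (u : List S), c σ u ≠ [])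
    (hinj : ∀ u : List S, Function.Injective fun σ => c σ u)
    (hpref : ∀ (u : List S) (σ σ' : S), (c σ u) <+: (c σ' u) → c σ u = c σ' u) :
    Function.Injective (gaExt c huffF) := by
  have key : ∀ (w₁ : List S) (p w₂ : List S),
      seqExt c p w₁ = seqExt c p w₂ → w₁ = w₂ := by
    intro w₁
    induction w₁ with
    | nil =>
      intro p w₂ h
      cases w₂ with
      | nil => rfl
      | cons b t =>
        exfalso
        simp [seqExt] at h
        exact hne b p h.1
    | cons a t ih =>
      intro p w₂ h
      cases w₂ with
      | nil =>
        exfalso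
        simp [seqExt] at h
        exact hne a p h.1
      | cons b t' =>
        simp only [seqExt] at h
        have hab : c a p = c b p := by
          rcases List.prefix_or_prefix_of_prefix
            (List.prefix_append (c a p) (seqExt c (p ++ [a]) t))
            (h ▸ List.prefix_append (c b p) (seqExt c (p ++ [b]) t')) with hp | hp
          · exact hpref p a b hp
          · exact (hpref p b a hp).symm
        have hab' : a = b := hinj p hab
        subst hab'
        rw [hab] at h
        have := List.append_cancel_left h
        rw [ih (p ++ [a]) t' this]
  intro w₁ w₂ h
  rw [gaExt_eq, gaExt_eq] at h
  exact key w₁ [] w₂ h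
end
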